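/- Let K > 0 and let P and P' be real-valued random variables (possibly on different probability spaces) with E[e^P] < ∞, E[e^{P'}] < ∞ and E[e^{P'}] = E[e^P]. Then |K·E[(e^{P'} − 1)^+] − K·E[(e^P − 1)^+]| ≤ (K/(2π)) ∫_ℝ |E[e^{(1/2+iu)P'}] − E[e^{(1/2+iu)P}]|/(1/4 + u²) du. (Carr–Madan bound: the difference of call prices is controlled by the integrated difference of damped characteristic functions on the line Re z = 1/2.) -/

import Mathlib

/-!
Since `(eˣ - 1)⁺ = eˣ - min eˣ 1` and both models have the same forward `E[e^P]`, the difference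
of call prices is `K (E[min (e^P) 1] - E[min (e^P') 1])`. Now `min eˣ 1 = e^{x/2} e^{-|x|/2}`, and
Fourier inversion of the two-sided exponential gives
`e^{-|x|/2} = (2π)⁻¹ ∫ e^{iux} / (1/4 + u²) du`. By Fubini, justified by `E[e^{P/2}] < ∞`,
`2π E[min (e^P) 1] = ∫ φ_P(u) / (1/4 + u²) du`; subtracting the two representations and taking
the norm inside the integral gives the bound.
-/

open MeasureTheory Real Set FourierTransform Complex

lemma integrable_exp_neg_mul_abs {a : ℝ} (ha : 0 < a) :
    Integrable fun x : ℝ => rexp (-a * |x|) := by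
  have hIoi : IntegrableOn (fun x : ℝ => rexp (-a * |x|)) (Ioi 0) :=
    (exp_neg_integrableOn_Ioi 0 ha).congr_fun (fun x hx => by simp [abs_of_pos hx.out])
      measurableSet_Ioi
  have hIic : IntegrableOn (fun x : ℝ => rexp (-a * |x|)) (Iic 0) :=
    (integrableOn_exp_mul_Iic ha 0).congr_fun
      (fun x hx => by simp [abs_of_nonpos hx.out]) measurableSet_Iic
  simpa [← integrableOn_univ, Iic_union_Ioi] using hIic.union hIoi

lemma fourier_exp_neg_mul_abs {a : ℝ} (ha : 0 < a) (ξ : ℝ) :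
    𝓕 (fun x : ℝ => (rexp (-a * |x|) : ℂ)) ξ = (2 * a / (a ^ 2 + (2 * π * ξ) ^ 2) : ℝ) := by
  set b : ℂ := (2 * π * ξ : ℝ) * I with hb
  have hint : Integrable fun v : ℝ => cexp (↑(-2 * π * v * ξ) * I) • (rexp (-a * |v|) : ℂ) :=
    (integrable_exp_neg_mul_abs ha).ofReal.bdd_mul (c := 1) (by fun_prop)
      (ae_of_all _ fun v => (norm_exp_ofReal_mul_I _).le)
  have hIoi : ∫ v in Ioi (0 : ℝ), cexp (↑(-2 * π * v * ξ) * I) • (rexp (-a * |v|) : ℂ)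
      = 1 / (a + b) := by
    rw [setIntegral_congr_fun measurableSet_Ioi (g := fun v : ℝ => cexp ((-a - b) * v))
      fun v hv => ?_, integral_exp_mul_complex_Ioi (by simp [b, ha]) 0]
    · rw [ofReal_zero, mul_zero, Complex.exp_zero, neg_div, ← div_neg, neg_sub', neg_neg,
        sub_neg_eq_add]
    · rw [abs_of_pos hv.out, smul_eq_mul, ofReal_exp, ← Complex.exp_add, hb]
      push_cast
      ring_nf
  have hIic : ∫ v in Iic (0 : ℝ), cexp (↑(-2 * π * v * ξ) * I) • (rexp (-a * |v|) : ℂ)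
      = 1 / (a - b) := by
    rw [setIntegral_congr_fun measurableSet_Iic (g := fun v : ℝ => cexp ((a - b) * v))
      fun v hv => ?_, integral_exp_mul_complex_Iic (by simp [b, ha]) 0]
    · simp
    · rw [abs_of_nonpos hv.out, smul_eq_mul, ofReal_exp, ← Complex.exp_add, hb]
      push_cast
      ring_nf
  have hab : (a : ℂ) + b ≠ 0 := fun h => by simpa [b, ha.ne'] using congrArg re h
  have hab' : (a : ℂ) - b ≠ 0 := fun h => by simpa [b, ha.ne'] using congrArg re h
  have hprod : (a - b) * (a + b) = ((a ^ 2 + (2 * π * ξ) ^ 2 : ℝ) : ℂ) := by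
    rw [hb]
    push_cast
    ring_nf
    rw [I_sq]
    ring
  rw [fourier_real_eq_integral_exp_smul, ← intervalIntegral.integral_Iic_add_Ioi
    hint.integrableOn hint.integrableOn, hIoi, hIic, div_add_div _ _ hab' hab, hprod]
  push_cast
  ring

lemma integrable_inv_sq_add_sq {a : ℝ} (ha : a ≠ 0) :
    Integrable fun u : ℝ => (a ^ 2 + u ^ 2)⁻¹ := by
  convert (integrable_inv_one_add_sq.comp_div ha).const_mul (a ^ 2)⁻¹ using 2 with u
  field_simp

lemma integral_cexp_mul_I_div_sq_add_sq {a : ℝ} (ha : 0 < a) (x : ℝ) :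
    ∫ u : ℝ, cexp (u * x * I) / (a ^ 2 + u ^ 2) = (π / a * rexp (-a * |x|) : ℝ) := by
  set f : ℝ → ℂ := fun x => (rexp (-a * |x|) : ℂ)
  have hf : 𝓕 f = fun ξ => ((2 * a * (a ^ 2 + (2 * π * ξ) ^ 2)⁻¹ : ℝ) : ℂ) :=
    funext fun ξ => by rw [fourier_exp_neg_mul_abs ha, div_eq_mul_inv]
  have hf_int : Integrable (𝓕 f) := by
    rw [hf]
    exact (((integrable_inv_sq_add_sq ha.ne').comp_mul_left' (by positivity)).const_mul
      (2 * a)).ofReal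
  have hinv := (integrable_exp_neg_mul_abs ha).ofReal.fourierInv_fourier_eq hf_int
    (v := x) (continuous_ofReal.comp (by fun_prop)).continuousAt
  -- Fourier inversion at `x`, followed by the substitution `u = 2πξ`.
  have hscale := Measure.integral_comp_mul_left
    (fun u : ℝ => cexp (u * x * I) / (a ^ 2 + u ^ 2)) (2 * π)
  rw [fourierInv_eq', hf] at hinv
  simp only [RCLike.inner_apply, conj_trivial] at hinv
  have hpt : ∀ v : ℝ,
      cexp (↑(2 * π * (x * v)) * I) • ((2 * a * (a ^ 2 + (2 * π * v) ^ 2)⁻¹ : ℝ) : ℂ)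
      = 2 * a * (cexp (↑(2 * π * v) * x * I) / (a ^ 2 + ↑(2 * π * v) ^ 2)) := fun v => by
    rw [smul_eq_mul]
    push_cast
    ring_nf
  simp_rw [hpt, integral_const_mul, hscale, abs_of_pos (by positivity : (0 : ℝ) < (2 * π)⁻¹),
    Complex.real_smul] at hinv
  have ha' : (a : ℂ) ≠ 0 := ofReal_ne_zero.mpr ha.ne'
  push_cast at hinv
  field_simp at hinv
  rw [← mul_right_inj' ha', hinv]
  simp [f]
  field_simp

lemma min_exp_one_eq (x : ℝ) : min (rexp x) 1 = rexp (x / 2) * rexp (-(1 / 2) * |x|) := by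
  calc min (rexp x) 1 = rexp (min x 0) := by rw [Real.exp_monotone.map_min, Real.exp_zero]
    _ = rexp (x / 2) * rexp (-(1 / 2) * |x|) := by
      rw [← Real.exp_add]
      rcases le_total x 0 with hx | hx
      · rw [min_eq_left hx, abs_of_nonpos hx]; ring_nf
      · rw [min_eq_right hx, abs_of_nonneg hx]; ring_nf

lemma norm_quarter_add_sq (u : ℝ) : ‖(1 / 4 : ℂ) + (u : ℂ) ^ 2‖ = 1 / 4 + u ^ 2 := by
  rw [show (1 / 4 : ℂ) + (u : ℂ) ^ 2 = ((1 / 4 + u ^ 2 : ℝ) : ℂ) by push_cast; ring, norm_real,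
    Real.norm_of_nonneg (by positivity)]

lemma integral_cexp_div_quarter_add_sq (x : ℝ) :
    ∫ u : ℝ, cexp (((1 / 2 : ℂ) + (u : ℂ) * I) * (x : ℂ)) / ((1 / 4 : ℂ) + (u : ℂ) ^ 2)
      = ((2 * π * min (rexp x) 1 : ℝ) : ℂ) := by
  calc ∫ u : ℝ, cexp (((1 / 2 : ℂ) + (u : ℂ) * I) * (x : ℂ)) / ((1 / 4 : ℂ) + (u : ℂ) ^ 2)
      = ∫ u : ℝ, (rexp (x / 2) : ℂ) * (cexp (u * x * I) / (((1 / 2 : ℝ) : ℂ) ^ 2 + u ^ 2)) := by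
        congr 1 with u
        rw [ofReal_exp, mul_div_assoc', ← Complex.exp_add]
        push_cast
        ring_nf
    _ = ((2 * π * min (rexp x) 1 : ℝ) : ℂ) := by
        rw [integral_const_mul, integral_cexp_mul_I_div_sq_add_sq (by norm_num), min_exp_one_eq]
        push_cast
        ring

section DampedCharFun

variable {Ω : Type*} [MeasurableSpace Ω] {μ : Measure Ω} {X : Ω → ℝ}

noncomputable def dampedCharFun (μ : Measure Ω) (X : Ω → ℝ) (u : ℝ) : ℂ :=
  ∫ ω, cexp (((1 / 2 : ℂ) + (u : ℂ) * I) * (X ω : ℂ)) ∂μ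

lemma aemeasurable_of_integrable_exp (hX : Integrable (fun ω => rexp (X ω)) μ) :
    AEMeasurable X μ := by
  simpa using hX.aemeasurable.log

lemma integral_max_exp_sub_one_zero (hX : Integrable (fun ω => rexp (X ω)) μ) :
    ∫ ω, max (rexp (X ω) - 1) 0 ∂μ = ∫ ω, rexp (X ω) ∂μ - ∫ ω, min (rexp (X ω)) 1 ∂μ := by
  have hmin : Integrable (fun ω => min (rexp (X ω)) 1) μ :=
    hX.mono' ((aemeasurable_of_integrable_exp hX).exp.min aemeasurable_const).aestronglyMeasurable
      (ae_of_all _ fun ω => by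
        rw [Real.norm_eq_abs, abs_of_pos (lt_min (Real.exp_pos _) one_pos)]
        exact min_le_left _ _)
  rw [← integral_sub hX hmin]
  congr 1 with ω
  rw [← max_sub_sub_left, sub_self, max_comm]

variable [IsFiniteMeasure μ]

lemma integrable_dampedCharFun_integrand (hX : Integrable (fun ω => rexp (X ω)) μ) :
    Integrable (fun p : ℝ × Ω => cexp (((1 / 2 : ℂ) + (p.1 : ℂ) * I) * (X p.2 : ℂ))
      / ((1 / 4 : ℂ) + (p.1 : ℂ) ^ 2)) ((volume : Measure ℝ).prod μ) := by
  have hhalf : Integrable (fun ω => rexp (1 / 2 * X ω)) μ :=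
    ProbabilityTheory.integrable_exp_mul_of_le_of_le (a := 0) (b := 1) (by simp)
      (by simpa using hX) (by norm_num) (by norm_num)
  have hden := integrable_inv_sq_add_sq (a := 1 / 2) (by norm_num)
  refine (hden.mul_prod hhalf).mono' ?_ (ae_of_all _ fun p => ?_)
  · have hG : Measurable fun q : ℝ × ℝ =>
        cexp (((1 / 2 : ℂ) + (q.1 : ℂ) * I) * (q.2 : ℂ)) / ((1 / 4 : ℂ) + (q.1 : ℂ) ^ 2) := by
      fun_prop
    exact (hG.comp_aemeasurable (measurable_fst.aemeasurable.prodMk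
      (aemeasurable_of_integrable_exp hX).comp_snd)).aestronglyMeasurable
  · rw [norm_div, norm_quarter_add_sq, Complex.norm_exp]
    norm_num [div_eq_inv_mul]

lemma integrable_dampedCharFun_div (hX : Integrable (fun ω => rexp (X ω)) μ) :
    Integrable fun u : ℝ => dampedCharFun μ X u / ((1 / 4 : ℂ) + (u : ℂ) ^ 2) := by
  simpa only [dampedCharFun, integral_div] using
    (integrable_dampedCharFun_integrand hX).integral_prod_left

lemma integral_dampedCharFun_div (hX : Integrable (fun ω => rexp (X ω)) μ) :
    ∫ u : ℝ, dampedCharFun μ X u / ((1 / 4 : ℂ) + (u : ℂ) ^ 2)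
      = ((2 * π * ∫ ω, min (rexp (X ω)) 1 ∂μ : ℝ) : ℂ) := by
  simp only [dampedCharFun, ← integral_div]
  rw [integral_integral_swap (integrable_dampedCharFun_integrand hX)]
  simp_rw [integral_cexp_div_quarter_add_sq]
  rw [← integral_const_mul]
  exact integral_ofReal

end DampedCharFun

section Comparison

variable {Ω Ω' : Type*} [MeasurableSpace Ω] [MeasurableSpace Ω'] {μ : Measure Ω} {μ' : Measure Ω'}
  [IsFiniteMeasure μ] [IsFiniteMeasure μ'] {X : Ω → ℝ} {X' : Ω' → ℝ}

lemma two_pi_mul_abs_integral_min_exp_one_sub_le (hX : Integrable (fun ω => rexp (X ω)) μ)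
    (hX' : Integrable (fun ω => rexp (X' ω)) μ') :
    2 * π * |∫ ω, min (rexp (X' ω)) 1 ∂μ' - ∫ ω, min (rexp (X ω)) 1 ∂μ|
      ≤ ∫ u : ℝ, ‖dampedCharFun μ' X' u - dampedCharFun μ X u‖ / (1 / 4 + u ^ 2) := by
  calc 2 * π * |∫ ω, min (rexp (X' ω)) 1 ∂μ' - ∫ ω, min (rexp (X ω)) 1 ∂μ|
      = ‖∫ u : ℝ, (dampedCharFun μ' X' u / ((1 / 4 : ℂ) + (u : ℂ) ^ 2)
          - dampedCharFun μ X u / ((1 / 4 : ℂ) + (u : ℂ) ^ 2))‖ := by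
        rw [integral_sub (integrable_dampedCharFun_div hX') (integrable_dampedCharFun_div hX),
          integral_dampedCharFun_div hX', integral_dampedCharFun_div hX, ← ofReal_sub, norm_real,
          Real.norm_eq_abs, ← mul_sub, abs_mul, abs_of_pos two_pi_pos]
    _ ≤ ∫ u : ℝ, ‖dampedCharFun μ' X' u / ((1 / 4 : ℂ) + (u : ℂ) ^ 2)
          - dampedCharFun μ X u / ((1 / 4 : ℂ) + (u : ℂ) ^ 2)‖ :=
        norm_integral_le_integral_norm _
    _ = ∫ u : ℝ, ‖dampedCharFun μ' X' u - dampedCharFun μ X u‖ / (1 / 4 + u ^ 2) := by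
        congr 1 with u
        rw [div_sub_div_same, norm_div, norm_quarter_add_sq]

end Comparison

theorem carr_madan_bound_general {Ω Ω' : Type*} [MeasurableSpace Ω] [MeasurableSpace Ω']
    (ℙ : Measure Ω) (ℙ' : Measure Ω') [IsProbabilityMeasure ℙ] [IsProbabilityMeasure ℙ']
    (K : ℝ) (hK : 0 < K) (P : Ω → ℝ) (P' : Ω' → ℝ)
    (hint : Integrable (fun ω => Real.exp (P ω)) ℙ)
    (hint' : Integrable (fun ω => Real.exp (P' ω)) ℙ')
    (heq : ∫ ω, Real.exp (P' ω) ∂ℙ' = ∫ ω, Real.exp (P ω) ∂ℙ) :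
    |K * ∫ ω, max (Real.exp (P' ω) - 1) 0 ∂ℙ' - K * ∫ ω, max (Real.exp (P ω) - 1) 0 ∂ℙ|
      ≤ (K / (2 * Real.pi)) *
        ∫ u : ℝ,
          ‖((∫ ω, Complex.exp (((1 / 2 : ℂ) + (u : ℂ) * Complex.I) * (P' ω : ℂ)) ∂ℙ')
              - ∫ ω, Complex.exp (((1 / 2 : ℂ) + (u : ℂ) * Complex.I) * (P ω : ℂ)) ∂ℙ)‖
          / (1 / 4 + u ^ 2) := by
  rw [integral_max_exp_sub_one_zero hint', integral_max_exp_sub_one_zero hint, heq, ← mul_sub,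
    sub_sub_sub_cancel_left, abs_mul, abs_of_pos hK, abs_sub_comm]
  calc K * |∫ ω, min (rexp (P' ω)) 1 ∂ℙ' - ∫ ω, min (rexp (P ω)) 1 ∂ℙ|
      = K / (2 * π) * (2 * π * |∫ ω, min (rexp (P' ω)) 1 ∂ℙ' - ∫ ω, min (rexp (P ω)) 1 ∂ℙ|) := by
        field_simp
    _ ≤ _ := mul_le_mul_of_nonneg_left (two_pi_mul_abs_integral_min_exp_one_sub_le hint hint')
        (by positivity)

/-- Carr–Madan bound: the difference of (undiscounted) call prices is controlled by
the integrated difference of damped characteristic functions on the line `Re z = 1/2`. -/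
theorem carr_madan_bound {Ω Ω' : Type*} [MeasurableSpace Ω] [MeasurableSpace Ω']
    (ℙ : Measure Ω) (ℙ' : Measure Ω') [IsProbabilityMeasure ℙ] [IsProbabilityMeasure ℙ']
    (K : ℝ) (hK : 0 < K) (P : Ω → ℝ) (P' : Ω' → ℝ) (hP : Measurable P) (hP' : Measurable P')
    (hint : Integrable (fun ω => Real.exp (P ω)) ℙ)
    (hint' : Integrable (fun ω => Real.exp (P' ω)) ℙ')
    (heq : ∫ ω, Real.exp (P' ω) ∂ℙ' = ∫ ω, Real.exp (P ω) ∂ℙ) :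
    |K * ∫ ω, max (Real.exp (P' ω) - 1) 0 ∂ℙ' - K * ∫ ω, max (Real.exp (P ω) - 1) 0 ∂ℙ|
      ≤ (K / (2 * Real.pi)) *
        ∫ u : ℝ,
          ‖((∫ ω, Complex.exp (((1 / 2 : ℂ) + (u : ℂ) * Complex.I) * (P' ω : ℂ)) ∂ℙ')
              - ∫ ω, Complex.exp (((1 / 2 : ℂ) + (u : ℂ) * Complex.I) * (P ω : ℂ)) ∂ℙ)‖
          / (1 / 4 + u ^ 2) :=
  carr_madan_bound_general ℙ ℙ' K hK P P' hint hint' heq
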